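/- Let Q be an n×n Stieltjes matrix, π a permutation of [n], and z ∈ {0,1}^n with support S. Then the polymatroid inequality holds entrywise: (Q ∘ z z⊤)† ≤ Σ_{k=1}^n R(π_k; S_{k-1}^π) z_{π_k}, where R(π_k; S_{k-1}^π) = (Q∘e_{S_k^π}e_{S_k^π}⊤)† − (Q∘e_{S_{k-1}^π}e_{S_{k-1}^π}⊤)† and S_k^π = {π_1,…,π_k}. -/

import Mathlib

open Matrix
open scoped Classical

/-- The Moore–Penrose pseudoinverse of a real square matrix, defined via its four
characterizing equations (and `0` if no such matrix exists; by uniqueness of the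
Moore–Penrose pseudoinverse, when it exists this definition picks it out). -/
noncomputable def pinv {m : Type*} [Fintype m] [DecidableEq m]
    (A : Matrix m m ℝ) : Matrix m m ℝ :=
  if h : ∃ B : Matrix m m ℝ,
      A * B * A = A ∧ B * A * B = B ∧ (A * B)ᵀ = A * B ∧ (B * A)ᵀ = B * A
  then h.choose else 0

/-- `Q ∘ e_S e_Sᵀ`: the matrix agreeing with `Q` on entries indexed by `S × S`,
and zero elsewhere. -/
def mask {n : ℕ} (Q : Matrix (Fin n) (Fin n) ℝ) (S : Finset (Fin n)) :
    Matrix (Fin n) (Fin n) ℝ :=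
  Matrix.of fun i j => if i ∈ S ∧ j ∈ S then Q i j else 0

/-- `S_k^π = {π_1, …, π_k}`, the image under the permutation `π` of the first `k`
positions (`S_0^π = ∅`). -/
def Sk {n : ℕ} (π : Equiv.Perm (Fin n)) (k : ℕ) : Finset (Fin n) :=
  (Finset.univ.filter fun i : Fin n => (i : ℕ) < k).image π

/-- `R(π_{k+1}; S_k^π)`: the increment of the restricted pseudoinverses along the chain. -/
noncomputable def Rinc {n : ℕ} (Q : Matrix (Fin n) (Fin n) ℝ) (π : Equiv.Perm (Fin n))
    (k : ℕ) : Matrix (Fin n) (Fin n) ℝ :=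
  pinv (mask Q (Sk π (k + 1))) - pinv (mask Q (Sk π k))

/-!
Write `P_T` for the inverse of the principal submatrix `Q[T, T]`, padded with zeros; it is the
pseudoinverse of `Q ∘ e_T e_Tᵀ`. Bordering `T` by `e ∉ T` is a rank-one update
`P_{T+e} = P_T + s⁻¹ u uᵀ` with `u = e_e - P_T Q e_e` and Schur complement
`s = Q_ee - (Q P_T Q)_ee = uᵀ Q u > 0`.
For a Stieltjes matrix, induction on `T` gives `P_T ≥ 0`, hence `u ≥ 0`; and since only the
nonpositive off-diagonal entries of `Q` enter `u` and `s`, `u` grows and `s` shrinks as `P_T`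
grows. So `P_T` is monotone in `T`, and then so are its increments `P_{T+e} - P_T`: every entry
of `T ↦ P_T` is supermodular. Telescoping along the chain `S_k^π`, the increments of
`S ∩ S_k^π` are dominated by those of `S_k^π`.
-/

section MoorePenrose
variable {m : Type*} [Fintype m]

def IsMoorePenroseInverse (A B : Matrix m m ℝ) : Prop :=
  A * B * A = A ∧ B * A * B = B ∧ (A * B)ᵀ = A * B ∧ (B * A)ᵀ = B * A

theorem IsMoorePenroseInverse.unique {A B C : Matrix m m ℝ}
    (hB : IsMoorePenroseInverse A B) (hC : IsMoorePenroseInverse A C) : B = C := by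
  obtain ⟨hB₁, hB₂, hB₃, hB₄⟩ := hB
  obtain ⟨hC₁, hC₂, hC₃, hC₄⟩ := hC
  have hAB : A * B = A * C :=
    calc A * B = ((A * C * A) * B)ᵀ := by rw [hC₁, hB₃]
    _ = (A * B)ᵀ * (A * C)ᵀ := by rw [← transpose_mul]; noncomm_ring
    _ = A * C := by rw [hB₃, hC₃, ← mul_assoc, hB₁]
  have hBA : B * A = C * A :=
    calc B * A = (B * (A * C * A))ᵀ := by rw [hC₁, hB₄]
    _ = (C * A)ᵀ * (B * A)ᵀ := by rw [← transpose_mul]; noncomm_ring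
    _ = C * A := by rw [hC₄, hB₄, mul_assoc, ← mul_assoc A, hB₁]
  calc B = B * A * B := hB₂.symm
  _ = C * A * C := by rw [hBA, mul_assoc, hAB, ← mul_assoc]
  _ = C := hC₂

theorem pinv_eq_of_isMoorePenroseInverse [DecidableEq m] {A B : Matrix m m ℝ}
    (hB : IsMoorePenroseInverse A B) : pinv A = B :=
  have hex : ∃ C, IsMoorePenroseInverse A C := ⟨B, hB⟩
  (dif_pos hex).trans (hex.choose_spec.unique hB)

end MoorePenrose

section MaskInverse
variable {n : ℕ}

def coordProj (T : Finset (Fin n)) : Matrix (Fin n) (Fin n) ℝ :=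
  diagonal fun i => if i ∈ T then 1 else 0

theorem coordProj_mul_apply (T : Finset (Fin n)) (X : Matrix (Fin n) (Fin n) ℝ) (i j : Fin n) :
    (coordProj T * X) i j = if i ∈ T then X i j else 0 := by
  simp [coordProj, diagonal_mul]

theorem mul_coordProj_apply (T : Finset (Fin n)) (X : Matrix (Fin n) (Fin n) ℝ) (i j : Fin n) :
    (X * coordProj T) i j = if j ∈ T then X i j else 0 := by
  simp [coordProj, mul_diagonal]

theorem coordProj_transpose (T : Finset (Fin n)) : (coordProj T)ᵀ = coordProj T :=
  diagonal_transpose _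

theorem coordProj_mul_coordProj (S T : Finset (Fin n)) :
    coordProj S * coordProj T = coordProj (S ∩ T) := by
  simp only [coordProj, diagonal_mul_diagonal, Finset.mem_inter]
  congr 1; ext i; split_ifs <;> simp_all

theorem coordProj_mul_self (T : Finset (Fin n)) : coordProj T * coordProj T = coordProj T := by
  rw [coordProj_mul_coordProj, Finset.inter_self]

theorem coordProj_empty : coordProj (∅ : Finset (Fin n)) = 0 := by
  simp [coordProj]

theorem coordProj_insert {e : Fin n} {T : Finset (Fin n)} (he : e ∉ T) :
    coordProj (insert e T) = coordProj T + coordProj {e} := by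
  simp only [coordProj, diagonal_add, Finset.mem_insert, Finset.mem_singleton]
  congr 1; ext i; split_ifs <;> simp_all

theorem coordProj_singleton_mul_mul (e : Fin n) (X : Matrix (Fin n) (Fin n) ℝ) :
    coordProj {e} * X * coordProj {e} = X e e • coordProj {e} := by
  ext i j
  rw [mul_coordProj_apply, coordProj_mul_apply, Matrix.smul_apply]
  simp only [coordProj, diagonal_apply, Finset.mem_singleton, smul_eq_mul]
  split_ifs <;> simp_all

theorem mask_eq_coordProj_mul (Q : Matrix (Fin n) (Fin n) ℝ) (T : Finset (Fin n)) :
    mask Q T = coordProj T * Q * coordProj T := by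
  ext i j
  simp only [mask, of_apply, mul_coordProj_apply, coordProj_mul_apply]
  split_ifs <;> simp_all

/-- `P` is the inverse of the principal submatrix `Q[T, T]`, padded with zeros. -/
structure IsMaskInverse (Q : Matrix (Fin n) (Fin n) ℝ) (T : Finset (Fin n))
    (P : Matrix (Fin n) (Fin n) ℝ) : Prop where
  mask_mul : mask Q T * P = coordProj T
  coordProj_mul : coordProj T * P = P
  transpose_eq : Pᵀ = P

variable {Q P : Matrix (Fin n) (Fin n) ℝ} {T : Finset (Fin n)}

theorem isMaskInverse_empty (Q : Matrix (Fin n) (Fin n) ℝ) : IsMaskInverse Q ∅ 0 :=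
  ⟨by rw [mul_zero, coordProj_empty], mul_zero _, transpose_zero⟩

namespace IsMaskInverse

theorem mul_coordProj (h : IsMaskInverse Q T P) : P * coordProj T = P := by
  conv_lhs => rw [← h.transpose_eq, ← coordProj_transpose, ← transpose_mul, h.coordProj_mul,
    h.transpose_eq]

theorem mul_mask (hQ : Q.IsSymm) (h : IsMaskInverse Q T P) : P * mask Q T = coordProj T := by
  have hA : (mask Q T)ᵀ = mask Q T := by
    rw [mask_eq_coordProj_mul, transpose_mul, transpose_mul, coordProj_transpose, hQ.eq,
      mul_assoc]
  rw [← h.transpose_eq, ← hA, ← transpose_mul, h.mask_mul, coordProj_transpose]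

theorem pinv_eq (hQ : Q.IsSymm) (h : IsMaskInverse Q T P) : pinv (mask Q T) = P := by
  have hEA : coordProj T * mask Q T = mask Q T := by
    rw [mask_eq_coordProj_mul, ← mul_assoc, ← mul_assoc, coordProj_mul_self]
  refine pinv_eq_of_isMoorePenroseInverse ⟨?_, ?_, ?_, ?_⟩
  · rw [h.mask_mul, hEA]
  · rw [h.mul_mask hQ, h.coordProj_mul]
  · rw [h.mask_mul, coordProj_transpose]
  · rw [h.mul_mask hQ, coordProj_transpose]

end IsMaskInverse

end MaskInverse

section RankOneUpdate
variable {n : ℕ} {Q P : Matrix (Fin n) (Fin n) ℝ} {T : Finset (Fin n)} {e : Fin n}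

def schurCompl (Q P : Matrix (Fin n) (Fin n) ℝ) (e : Fin n) : ℝ := (Q - Q * P * Q) e e

def schurColumn (Q P : Matrix (Fin n) (Fin n) ℝ) (e : Fin n) : Matrix (Fin n) (Fin n) ℝ :=
  coordProj {e} - P * Q * coordProj {e}

theorem schurColumn_transpose (hQ : Q.IsSymm) (hP : Pᵀ = P) :
    (schurColumn Q P e)ᵀ = coordProj {e} - coordProj {e} * Q * P := by
  rw [schurColumn, transpose_sub, transpose_mul, transpose_mul, coordProj_transpose, hQ.eq, hP,
    mul_assoc]

theorem IsMaskInverse.insert (hQ : Q.IsSymm) (h : IsMaskInverse Q T P) (he : e ∉ T)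
    (hs : schurCompl Q P e ≠ 0) :
    IsMaskInverse Q (insert e T)
      (P + (schurCompl Q P e)⁻¹ • (schurColumn Q P e * (schurColumn Q P e)ᵀ)) := by
  have hdisj : T ∩ {e} = ∅ := Finset.disjoint_iff_inter_eq_empty.mp (by simpa using he)
  have hEF : coordProj T * coordProj {e} = 0 := by
    rw [coordProj_mul_coordProj, hdisj, coordProj_empty]
  have hFE : coordProj {e} * coordProj T = 0 := by
    rw [coordProj_mul_coordProj, Finset.inter_comm, hdisj, coordProj_empty]
  have hFF : coordProj {e} * coordProj {e} = coordProj {e} := coordProj_mul_self _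
  have hEQP : coordProj T * Q * P = coordProj T := by
    simpa only [mask_eq_coordProj_mul, mul_assoc _ (coordProj T) P, h.coordProj_mul] using
      h.mask_mul
  have hFSF : coordProj {e} * Q * coordProj {e} - coordProj {e} * Q * P * Q * coordProj {e} =
      schurCompl Q P e • coordProj {e} := by
    rw [schurCompl, ← coordProj_singleton_mul_mul]; noncomm_ring
  have hUt := schurColumn_transpose (e := e) hQ h.transpose_eq
  obtain ⟨-, hEP, hPt⟩ := h
  have hFP : coordProj {e} * P = 0 := by rw [← hEP, ← mul_assoc, hFE, zero_mul]
  have hPE' : (coordProj T + coordProj {e}) * P = P := by rw [add_mul, hEP, hFP, add_zero]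
  have hUE' : (coordProj T + coordProj {e}) * schurColumn Q P e = schurColumn Q P e := by
    simp only [schurColumn, mul_sub, add_mul, ← mul_assoc, hEF, hFF, hEP, hFP, zero_mul]; abel
  have hQU : (coordProj T + coordProj {e}) * Q * schurColumn Q P e =
      schurCompl Q P e • coordProj {e} := by
    simp only [schurColumn, mul_sub, add_mul, ← mul_assoc, hEQP, ← hFSF]; abel
  refine ⟨?_, ?_, ?_⟩
  -- With `E = coordProj T`, `F = coordProj {e}`, `U = schurColumn Q P e`, `A' = (E + F) Q (E + F)`:
  -- `A' (P + s⁻¹ U Uᵀ) = A' P + s⁻¹ (A' U) Uᵀ = (E + F Q P) + F (F - F Q P) = E + F`.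
  · rw [mask_eq_coordProj_mul, coordProj_insert he, mul_add, mul_smul_comm,
      mul_assoc _ _ P, hPE', ← mul_assoc, mul_assoc _ _ (schurColumn Q P e), hUE', hQU,
      smul_mul_assoc, smul_smul, inv_mul_cancel₀ hs, one_smul, add_mul, add_mul, hEQP, hUt,
      mul_sub, hFF, ← mul_assoc, ← mul_assoc, hFF]
    abel
  · rw [coordProj_insert he, mul_add, hPE', mul_smul_comm, ← mul_assoc, hUE']
  · rw [transpose_add, transpose_smul, transpose_mul, transpose_transpose, hPt]

theorem IsMaskInverse.schurCompl_pos (hQ : Q.PosDef) (h : IsMaskInverse Q T P) (he : e ∉ T) :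
    0 < schurCompl Q P e := by
  have hQs : Q.IsSymm := isHermitian_iff_isSymm.mp hQ.isHermitian
  set U := schurColumn Q P e with hU
  have hPQP : P * Q * P = P :=
    calc P * Q * P = P * coordProj T * Q * (coordProj T * P) := by
          rw [h.mul_coordProj, h.coordProj_mul]
    _ = P * mask Q T * P := by rw [mask_eq_coordProj_mul]; simp only [mul_assoc]
    _ = P := by rw [h.mul_mask hQs, h.coordProj_mul]
  have hquad : Uᵀ * Q * U = schurCompl Q P e • coordProj {e} := by
    rw [schurColumn_transpose hQs h.transpose_eq, hU, schurColumn, schurCompl,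
      ← coordProj_singleton_mul_mul]
    calc _ = coordProj {e} * Q * coordProj {e} - 2 • (coordProj {e} * Q * P * Q * coordProj {e})
          + coordProj {e} * Q * (P * Q * P) * Q * coordProj {e} := by noncomm_ring
    _ = _ := by rw [hPQP]; noncomm_ring
  have hu : (fun i => U i e) ≠ 0 := by
    refine Function.ne_iff.mpr ⟨e, ?_⟩
    rw [hU, schurColumn, ← h.coordProj_mul, Matrix.sub_apply, mul_assoc, mul_assoc,
      coordProj_mul_apply, if_neg he]
    simp [coordProj]
  have hpos := hQ.dotProduct_mulVec_pos hu
  have : (Uᵀ * Q * U) e e = star (fun i => U i e) ⬝ᵥ Q *ᵥ (fun i => U i e) := by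
    simp only [Matrix.mul_apply, transpose_apply, Finset.sum_mul, mul_assoc, dotProduct,
      Pi.star_apply, star_trivial, mulVec, Finset.mul_sum]
    exact Finset.sum_comm
  calc 0 < _ := hpos
  _ = (Uᵀ * Q * U) e e := this.symm
  _ = schurCompl Q P e := by simp [hquad, coordProj]

end RankOneUpdate

section Stieltjes
variable {n : ℕ} {Q P P' : Matrix (Fin n) (Fin n) ℝ} {T T' : Finset (Fin n)} {e : Fin n}

theorem IsMaskInverse.apply_eq_zero_of_notMem_left (h : IsMaskInverse Q T P) {i : Fin n}
    (hi : i ∉ T) (j : Fin n) : P i j = 0 := by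
  rw [← h.coordProj_mul, coordProj_mul_apply, if_neg hi]

theorem IsMaskInverse.apply_eq_zero_of_notMem_right (h : IsMaskInverse Q T P) {j : Fin n}
    (hj : j ∉ T) (i : Fin n) : P i j = 0 := by
  rw [← h.transpose_eq, transpose_apply, h.apply_eq_zero_of_notMem_left hj]

theorem schurColumn_apply (Q P : Matrix (Fin n) (Fin n) ℝ) (e i : Fin n) :
    schurColumn Q P e i e = (if i = e then 1 else 0) - ∑ k, P i k * Q k e := by
  rw [schurColumn, Matrix.sub_apply, mul_coordProj_apply, if_pos (Finset.mem_singleton_self e),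
    mul_apply]
  simp [coordProj, diagonal_apply]

theorem schurColumn_mul_transpose_apply (Q P : Matrix (Fin n) (Fin n) ℝ) (e i j : Fin n) :
    (schurColumn Q P e * (schurColumn Q P e)ᵀ) i j =
      schurColumn Q P e i e * schurColumn Q P e j e := by
  have hU : schurColumn Q P e * coordProj {e} = schurColumn Q P e := by
    rw [schurColumn, sub_mul, coordProj_mul_self, mul_assoc, coordProj_mul_self]
  rw [← hU, mul_apply, Finset.sum_eq_single e]
  · simp [mul_coordProj_apply]
  · intro k _ hk; simp [mul_coordProj_apply, hk]
  · simp

theorem sum_mul_le_sum_mul_of_offDiag_nonpos (hoff : ∀ i j : Fin n, i ≠ j → Q i j ≤ 0)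
    {x x' : Fin n → ℝ} (hx : x e = 0) (hx' : x' e = 0) (hle : ∀ k, x k ≤ x' k) :
    ∑ k, x' k * Q k e ≤ ∑ k, x k * Q k e := by
  refine Finset.sum_le_sum fun k _ => ?_
  by_cases hk : k = e
  · simp [hk, hx, hx']
  · exact mul_le_mul_of_nonpos_right (hle k) (hoff k e hk)

theorem schurColumn_apply_le (hoff : ∀ i j : Fin n, i ≠ j → Q i j ≤ 0)
    (h : IsMaskInverse Q T P) (h' : IsMaskInverse Q T' P') (he : e ∉ T) (he' : e ∉ T')
    (hle : ∀ i j, P i j ≤ P' i j) (i : Fin n) :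
    schurColumn Q P e i e ≤ schurColumn Q P' e i e := by
  rw [schurColumn_apply, schurColumn_apply]
  exact sub_le_sub_left (sum_mul_le_sum_mul_of_offDiag_nonpos hoff
    (h.apply_eq_zero_of_notMem_right he i) (h'.apply_eq_zero_of_notMem_right he' i)
    (hle i)) _

theorem schurColumn_apply_nonneg (hoff : ∀ i j : Fin n, i ≠ j → Q i j ≤ 0)
    (h : IsMaskInverse Q T P) (he : e ∉ T) (hP : ∀ i j, 0 ≤ P i j) (i : Fin n) :
    0 ≤ schurColumn Q P e i e := by
  refine le_trans ?_ (schurColumn_apply_le hoff (isMaskInverse_empty Q) h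
    (Finset.notMem_empty e) he hP i)
  rw [schurColumn_apply]
  split_ifs <;> simp

theorem schurCompl_le (hQ : Q.IsSymm) (hoff : ∀ i j : Fin n, i ≠ j → Q i j ≤ 0)
    (h : IsMaskInverse Q T P) (h' : IsMaskInverse Q T' P') (he : e ∉ T) (he' : e ∉ T')
    (hle : ∀ i j, P i j ≤ P' i j) :
    schurCompl Q P' e ≤ schurCompl Q P e := by
  have hQP : ∀ (R : Matrix (Fin n) (Fin n) ℝ) (l : Fin n), (Q * R) e l = ∑ k, R k l * Q k e :=
    fun R l => by rw [mul_apply]; exact Finset.sum_congr rfl fun k _ => by rw [mul_comm, hQ.apply]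
  have hle' : ∀ l, (Q * P') e l ≤ (Q * P) e l := fun l => by
    rw [hQP, hQP]
    exact sum_mul_le_sum_mul_of_offDiag_nonpos hoff (h.apply_eq_zero_of_notMem_left he l)
      (h'.apply_eq_zero_of_notMem_left he' l) (fun k => hle k l)
  simp only [schurCompl, Matrix.sub_apply, mul_apply (M := Q * _)]
  exact sub_le_sub_left (sum_mul_le_sum_mul_of_offDiag_nonpos hoff
    (by rw [hQP]; simp [h'.apply_eq_zero_of_notMem_right he'])
    (by rw [hQP]; simp [h.apply_eq_zero_of_notMem_right he]) hle') _

end Stieltjes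

section PinvMask
variable {n : ℕ} {Q : Matrix (Fin n) (Fin n) ℝ}

theorem pinv_mask_insert_apply (hQ : Q.IsSymm) {T : Finset (Fin n)}
    {P : Matrix (Fin n) (Fin n) ℝ} (h : IsMaskInverse Q T P) {e : Fin n} (he : e ∉ T)
    (hs : schurCompl Q P e ≠ 0) (i j : Fin n) :
    pinv (mask Q (insert e T)) i j =
      P i j + (schurCompl Q P e)⁻¹ * (schurColumn Q P e i e * schurColumn Q P e j e) := by
  rw [(h.insert hQ he hs).pinv_eq hQ, Matrix.add_apply, Matrix.smul_apply,
    schurColumn_mul_transpose_apply, smul_eq_mul]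

theorem isMaskInverse_pinv_mask (hQ : Q.PosDef) (hoff : ∀ i j : Fin n, i ≠ j → Q i j ≤ 0)
    (T : Finset (Fin n)) :
    IsMaskInverse Q T (pinv (mask Q T)) ∧ ∀ i j, 0 ≤ pinv (mask Q T) i j := by
  have hQs : Q.IsSymm := isHermitian_iff_isSymm.mp hQ.isHermitian
  induction T using Finset.induction_on with
  | empty =>
    rw [(isMaskInverse_empty Q).pinv_eq hQs]
    exact ⟨isMaskInverse_empty Q, fun _ _ => le_rfl⟩
  | insert e T he ih =>
    obtain ⟨h, hP⟩ := ih
    have hs := h.schurCompl_pos hQ he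
    have hR := h.insert hQs he hs.ne'
    refine ⟨hR.pinv_eq hQs ▸ hR, fun i j => ?_⟩
    have hu := schurColumn_apply_nonneg hoff h he hP
    rw [pinv_mask_insert_apply hQs h he hs.ne']
    exact add_nonneg (hP i j) (mul_nonneg (inv_nonneg.mpr hs.le) (mul_nonneg (hu i) (hu j)))

section Order
variable (hQ : Q.PosDef) (hoff : ∀ i j : Fin n, i ≠ j → Q i j ≤ 0)
include hQ hoff

theorem pinv_mask_le_insert (T : Finset (Fin n)) (e i j : Fin n) :
    pinv (mask Q T) i j ≤ pinv (mask Q (insert e T)) i j := by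
  by_cases he : e ∈ T
  · rw [Finset.insert_eq_of_mem he]
  obtain ⟨h, hP⟩ := isMaskInverse_pinv_mask hQ hoff T
  have hs := h.schurCompl_pos hQ he
  have hu := schurColumn_apply_nonneg hoff h he hP
  rw [pinv_mask_insert_apply (isHermitian_iff_isSymm.mp hQ.isHermitian) h he hs.ne']
  exact le_add_of_nonneg_right (mul_nonneg (inv_nonneg.mpr hs.le) (mul_nonneg (hu i) (hu j)))

theorem pinv_mask_mono {A B : Finset (Fin n)} (hAB : A ⊆ B) (i j : Fin n) :
    pinv (mask Q A) i j ≤ pinv (mask Q B) i j := by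
  suffices ∀ C : Finset (Fin n), pinv (mask Q A) i j ≤ pinv (mask Q (C ∪ A)) i j by
    simpa [Finset.sdiff_union_of_subset hAB] using this (B \ A)
  intro C
  induction C using Finset.induction_on with
  | empty => rw [Finset.empty_union]
  | insert c C _ ih =>
    rw [Finset.insert_union]
    exact ih.trans (pinv_mask_le_insert hQ hoff _ c i j)

theorem pinv_mask_supermodular {A B : Finset (Fin n)} (hAB : A ⊆ B) {e : Fin n} (he : e ∉ B)
    (i j : Fin n) :
    pinv (mask Q (insert e A)) i j + pinv (mask Q B) i j ≤
      pinv (mask Q (insert e B)) i j + pinv (mask Q A) i j := by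
  have hQs : Q.IsSymm := isHermitian_iff_isSymm.mp hQ.isHermitian
  have heA : e ∉ A := fun h => he (hAB h)
  obtain ⟨hA, hPA⟩ := isMaskInverse_pinv_mask hQ hoff A
  obtain ⟨hB, -⟩ := isMaskInverse_pinv_mask hQ hoff B
  have hle := pinv_mask_mono hQ hoff hAB
  have hsA := hA.schurCompl_pos hQ heA
  have hsB := hB.schurCompl_pos hQ he
  have hs : schurCompl Q (pinv (mask Q B)) e ≤ schurCompl Q (pinv (mask Q A)) e :=
    schurCompl_le hQs hoff hA hB heA he hle
  have hu := schurColumn_apply_le hoff hA hB heA he hle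
  have huA := schurColumn_apply_nonneg hoff hA heA hPA
  rw [pinv_mask_insert_apply hQs hA heA hsA.ne', pinv_mask_insert_apply hQs hB he hsB.ne']
  have : (schurCompl Q (pinv (mask Q A)) e)⁻¹ *
        (schurColumn Q (pinv (mask Q A)) e i e * schurColumn Q (pinv (mask Q A)) e j e) ≤
      (schurCompl Q (pinv (mask Q B)) e)⁻¹ *
        (schurColumn Q (pinv (mask Q B)) e i e * schurColumn Q (pinv (mask Q B)) e j e) :=
    mul_le_mul (inv_anti₀ hsB hs)
      (mul_le_mul (hu i) (hu j) (huA j) ((huA i).trans (hu i))) (mul_nonneg (huA i) (huA j))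
      (inv_nonneg.mpr hsB.le)
  linarith

end Order

end PinvMask

section Chain
variable {n : ℕ}

theorem Sk_zero (π : Equiv.Perm (Fin n)) : Sk π 0 = ∅ := by
  simp [Sk]

theorem Sk_self (π : Equiv.Perm (Fin n)) : Sk π n = Finset.univ := by
  ext x
  simp [Sk]

theorem Sk_succ (π : Equiv.Perm (Fin n)) (k : Fin n) :
    Sk π (k + 1) = insert (π k) (Sk π k) := by
  ext x
  simp only [Sk, Finset.mem_image, Finset.mem_filter, Finset.mem_univ, true_and,
    Finset.mem_insert]
  constructor
  · rintro ⟨a, ha, rfl⟩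
    rcases Nat.lt_succ_iff_lt_or_eq.mp ha with ha | ha
    · exact Or.inr ⟨a, ha, rfl⟩
    · exact Or.inl (congrArg π (Fin.ext ha))
  · rintro (rfl | ⟨a, ha, rfl⟩)
    · exact ⟨k, Nat.lt_succ_self _, rfl⟩
    · exact ⟨a, Nat.lt_succ_of_lt ha, rfl⟩

theorem apply_notMem_Sk (π : Equiv.Perm (Fin n)) (k : Fin n) : π k ∉ Sk π k := by
  simp [Sk]

theorem sub_le_sum_mul_of_supermodular (f : Finset (Fin n) → ℝ)
    (hf : ∀ A B e, A ⊆ B → e ∉ B → f (insert e A) + f B ≤ f (insert e B) + f A)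
    (π : Equiv.Perm (Fin n)) (z : Fin n → ℝ) (hz : ∀ i, z i = 0 ∨ z i = 1) :
    f (Finset.univ.filter fun i => z i = 1) - f ∅ ≤
      ∑ k : Fin n, z (π k) * (f (Sk π (k + 1)) - f (Sk π k)) := by
  set S := Finset.univ.filter fun i => z i = 1
  have step : ∀ k : Fin n, f (S ∩ Sk π (k + 1)) - f (S ∩ Sk π k) ≤
      z (π k) * (f (Sk π (k + 1)) - f (Sk π k)) := by
    intro k
    rw [Sk_succ]
    rcases hz (π k) with h0 | h1
    · rw [Finset.inter_insert_of_notMem (by simp [S, h0]), h0]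
      simp
    · rw [Finset.inter_insert_of_mem (by simp [S, h1]), h1, one_mul]
      have := hf (S ∩ Sk π k) (Sk π k) (π k) Finset.inter_subset_right (apply_notMem_Sk π k)
      linarith
  calc f S - f ∅ = ∑ k : Fin n, (f (S ∩ Sk π (k + 1)) - f (S ∩ Sk π k)) := by
        rw [Fin.sum_univ_eq_sum_range (fun k => f (S ∩ Sk π (k + 1)) - f (S ∩ Sk π k)),
          Finset.sum_range_sub (fun k => f (S ∩ Sk π k)), Sk_zero, Sk_self, Finset.inter_empty,
          Finset.inter_univ]
  _ ≤ _ := Finset.sum_le_sum fun k _ => step k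

end Chain

/-- validity of the polymatroid inequalities at binary points: for a Stieltjes
matrix `Q`, a permutation `π`, and `z ∈ {0,1}ⁿ`, entrywise
`(Q ∘ z zᵀ)† ≤ ∑_k z_{π_k} R(π_k; S_{k-1}^π)`. -/
theorem stmt15 {n : ℕ} (Q : Matrix (Fin n) (Fin n) ℝ)
    (hQ : Q.PosDef) (hoff : ∀ i j : Fin n, i ≠ j → Q i j ≤ 0)
    (π : Equiv.Perm (Fin n)) (z : Fin n → ℝ) (hz : ∀ i, z i = 0 ∨ z i = 1) :
    ∀ i j : Fin n,
      pinv (Matrix.of fun i j => Q i j * (z i * z j)) i j ≤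
        ∑ k : Fin n, z (π k) * Rinc Q π k i j := by
  intro i j
  have hmask : (Matrix.of fun i j => Q i j * (z i * z j)) =
      mask Q (Finset.univ.filter fun i => z i = 1) := by
    ext a b
    rcases hz a with ha | ha <;> rcases hz b with hb | hb <;> simp [mask, ha, hb]
  have hempty : pinv (mask Q ∅) = 0 :=
    (isMaskInverse_empty Q).pinv_eq (isHermitian_iff_isSymm.mp hQ.isHermitian)
  simpa [hmask, hempty, Rinc] using sub_le_sum_mul_of_supermodular (fun T => pinv (mask Q T) i j)
    (fun A B e hAB he => pinv_mask_supermodular hQ hoff hAB he i j) π z hz
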